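/- arXiv:2112.13867 — 2 statements merged into one kernel-verified Lean document; each statement's English description precedes it below -/
import Mathlib

section
/- There exists a universal constant C > 0 such that for all d ≥ 1, all θ ∈ S^{d−1}, all b ∈ ℝ and all σ ∈ (0,1], the function u(t) = d/dt ( e^{−σ²t²/2 − itb} ∏_{i=1}^d cos(tθ_i) sin(2tθ_i) ) satisfies sup_{t∈ℝ} |u'(t)| ≤ C κ^d ( d² + d|b| + b² ) and sup_{t∈ℝ} |t·u(t)| ≤ C κ^d (d + |b|)/σ. -/
/-!
Write the function under the derivative as `chirp · P`, with the Gaussian chirp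
`chirp s = exp (-σ²s²/2 - isb)` and `P s = ∏ᵢ φ (s θᵢ)`, `φ x = cos x · sin 2x`.
Since `|θᵢ| ≤ 1`, each factor of `P` is bounded by `κ` and its first two derivatives by `3` and `9`,
so by the Leibniz rule every derivative of `P` costs at most one factor `κ`:
`κ ‖P'‖ ≤ 3dκᵈ` and `κ² ‖P''‖ ≤ 9d²κᵈ`. The chirp and its derivatives are controlled through
`|x| e^{-x²/2} ≤ 1` and `x² e^{-x²/2} ≤ 2` at `x = σs`; the same inequalities absorb a factor `t`
at the price of `1/σ`. Expanding `u = chirp' P + chirp P'` and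
`u' = chirp'' P + 2 chirp' P' + chirp P''` then gives the claim with `C = 18/κ²`.
-/

noncomputable section

/-- `κ = sup_{t ∈ ℝ} |cos t · sin 2t| = 0.7698…` -/
def kappa : ℝ := ⨆ t : ℝ, |Real.cos t * Real.sin (2 * t)|

/-- The auxiliary function
`u(t) = d/dt ( e^{−σ²t²/2 − itb} ∏_{i=1}^d cos(tθ_i) sin(2tθ_i) )`. -/
def uAux (d : ℕ) (θ : EuclideanSpace ℝ (Fin d)) (b σ : ℝ) (t : ℝ) : ℂ :=
  deriv (fun s : ℝ =>
    Complex.exp (-((σ ^ 2 * s ^ 2 / 2 : ℝ) : ℂ) - Complex.I * s * b) *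
      ∏ i, ((Real.cos (s * θ i) * Real.sin (2 * s * θ i) : ℝ) : ℂ)) t

namespace UAux

open Finset

theorem hasDerivAt_deriv_mul {𝕜 𝔸 : Type*} [NontriviallyNormedField 𝕜] [NormedCommRing 𝔸]
    [NormedAlgebra 𝕜 𝔸] {f f' g g' : 𝕜 → 𝔸} {f'' g'' : 𝔸} {x : 𝕜}
    (hf : HasDerivAt f (f' x) x) (hf' : HasDerivAt f' f'' x)
    (hg : HasDerivAt g (g' x) x) (hg' : HasDerivAt g' g'' x) :
    HasDerivAt (fun y => f' y * g y + f y * g' y)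
      (f'' * g x + 2 * (f' x * g' x) + f x * g'') x := by
  rw [two_mul, add_assoc (f'' * g x), add_assoc (f' x * g' x), ← add_assoc]
  exact (hf'.fun_mul hg).fun_add (hf.fun_mul hg')

/-- The derivative bounds carry powers of `κ` on the left, not `κ ^ (#s - 1)` on the right,
to avoid truncated subtraction in `ℕ`. -/
theorem exists_hasDerivAt_prod_of_norm_le {ι : Type*} (s : Finset ι) {f f' f'' : ι → ℝ → ℂ}
    {κ A B : ℝ} (hf : ∀ i t, HasDerivAt (f i) (f' i t) t)
    (hf' : ∀ i t, HasDerivAt (f' i) (f'' i t) t) (h₀ : ∀ i t, ‖f i t‖ ≤ κ)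
    (h₁ : ∀ i t, ‖f' i t‖ ≤ A) (h₂ : ∀ i t, ‖f'' i t‖ ≤ B) :
    ∃ P₁ P₂ : ℝ → ℂ, ∀ t, HasDerivAt (fun t => ∏ i ∈ s, f i t) (P₁ t) t ∧
      HasDerivAt P₁ (P₂ t) t ∧ ‖∏ i ∈ s, f i t‖ ≤ κ ^ #s ∧ κ * ‖P₁ t‖ ≤ #s * A * κ ^ #s ∧
      κ ^ 2 * ‖P₂ t‖ ≤ #s * (κ * B + (#s - 1) * A ^ 2) * κ ^ #s := by
  classical
  induction s using Finset.induction_on with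
  | empty => exact ⟨0, 0, fun t => by simp [hasDerivAt_const]⟩
  | insert a s ha ih =>
    obtain ⟨P₁, P₂, hP⟩ := ih
    refine ⟨fun t => f' a t * ∏ i ∈ s, f i t + f a t * P₁ t,
      fun t => f'' a t * ∏ i ∈ s, f i t + 2 * (f' a t * P₁ t) + f a t * P₂ t, fun t => ?_⟩
    obtain ⟨hd₁, hd₂, b₀, b₁, b₂⟩ := hP t
    have a₀ := h₀ a t
    have a₁ := h₁ a t
    have a₂ := h₂ a t
    have hκ : 0 ≤ κ := (norm_nonneg _).trans a₀
    have hA : 0 ≤ A := (norm_nonneg _).trans a₁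
    have hB : 0 ≤ B := (norm_nonneg _).trans a₂
    simp only [prod_insert ha, card_insert_of_notMem ha]
    refine ⟨(hf a t).mul hd₁, hasDerivAt_deriv_mul (hf a t) (hf' a t) hd₁ hd₂, ?_, ?_, ?_⟩
    · rw [norm_mul, pow_succ']
      gcongr
    · calc κ * ‖f' a t * ∏ i ∈ s, f i t + f a t * P₁ t‖
          ≤ κ * (‖f' a t‖ * ‖∏ i ∈ s, f i t‖ + ‖f a t‖ * ‖P₁ t‖) := by
            gcongr
            exact (norm_add_le _ _).trans (by rw [norm_mul, norm_mul])
        _ = κ * ‖f' a t‖ * ‖∏ i ∈ s, f i t‖ + ‖f a t‖ * (κ * ‖P₁ t‖) := by ring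
        _ ≤ κ * A * κ ^ #s + κ * (#s * A * κ ^ #s) := by gcongr
        _ = ↑(#s + 1) * A * κ ^ (#s + 1) := by push_cast; ring
    · calc κ ^ 2 * ‖f'' a t * ∏ i ∈ s, f i t + 2 * (f' a t * P₁ t) + f a t * P₂ t‖
          ≤ κ ^ 2 * (‖f'' a t‖ * ‖∏ i ∈ s, f i t‖ + 2 * (‖f' a t‖ * ‖P₁ t‖)
              + ‖f a t‖ * ‖P₂ t‖) := by
            gcongr
            refine (norm_add₃_le ..).trans ?_
            rw [norm_mul, norm_mul, norm_mul, norm_mul, Complex.norm_ofNat]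
        _ = κ ^ 2 * ‖f'' a t‖ * ‖∏ i ∈ s, f i t‖ + 2 * (κ * ‖f' a t‖) * (κ * ‖P₁ t‖)
              + ‖f a t‖ * (κ ^ 2 * ‖P₂ t‖) := by ring
        _ ≤ κ ^ 2 * B * κ ^ #s + 2 * (κ * A) * (#s * A * κ ^ #s)
              + κ * (#s * (κ * B + (#s - 1) * A ^ 2) * κ ^ #s) := by
            gcongr
        _ = ↑(#s + 1) * (κ * B + (↑(#s + 1) - 1) * A ^ 2) * κ ^ (#s + 1) := by push_cast; ring

def cosSinTwo (x : ℝ) : ℝ := Real.cos x * Real.sin (2 * x)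

def cosSinTwoDeriv (x : ℝ) : ℝ :=
  2 * Real.cos x * Real.cos (2 * x) - Real.sin x * Real.sin (2 * x)

def cosSinTwoDeriv2 (x : ℝ) : ℝ :=
  -5 * Real.cos x * Real.sin (2 * x) - 4 * Real.sin x * Real.cos (2 * x)

theorem hasDerivAt_cosSinTwo (x : ℝ) : HasDerivAt cosSinTwo (cosSinTwoDeriv x) x := by
  have h₂ : HasDerivAt (fun y : ℝ => 2 * y) 2 x := hasDerivAt_const_mul 2
  refine ((Real.hasDerivAt_cos x).fun_mul h₂.sin).congr_deriv ?_
  simp only [cosSinTwoDeriv]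
  ring

theorem hasDerivAt_cosSinTwoDeriv (x : ℝ) : HasDerivAt cosSinTwoDeriv (cosSinTwoDeriv2 x) x := by
  have h₂ : HasDerivAt (fun y : ℝ => 2 * y) 2 x := hasDerivAt_const_mul 2
  refine ((((Real.hasDerivAt_cos x).const_mul 2).fun_mul h₂.cos).fun_sub
    ((Real.hasDerivAt_sin x).fun_mul h₂.sin)).congr_deriv ?_
  simp only [cosSinTwoDeriv2]
  ring

theorem abs_cosSinTwoDeriv_le (x : ℝ) : |cosSinTwoDeriv x| ≤ 3 := by
  calc |cosSinTwoDeriv x|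
      ≤ 2 * |Real.cos x| * |Real.cos (2 * x)| + |Real.sin x| * |Real.sin (2 * x)| := by
        refine (abs_sub _ _).trans_eq ?_
        rw [abs_mul, abs_mul, abs_mul, abs_two]
    _ ≤ 2 * 1 * 1 + 1 * 1 := by
        gcongr <;> first | exact Real.abs_cos_le_one _ | exact Real.abs_sin_le_one _
    _ = 3 := by norm_num

theorem abs_cosSinTwoDeriv2_le (x : ℝ) : |cosSinTwoDeriv2 x| ≤ 9 := by
  calc |cosSinTwoDeriv2 x|
      ≤ 5 * |Real.cos x| * |Real.sin (2 * x)| + 4 * |Real.sin x| * |Real.cos (2 * x)| := by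
        refine (abs_sub _ _).trans_eq ?_
        norm_num [abs_mul]
    _ ≤ 5 * 1 * 1 + 4 * 1 * 1 := by
        gcongr <;> first | exact Real.abs_cos_le_one _ | exact Real.abs_sin_le_one _
    _ = 9 := by norm_num

theorem abs_cosSinTwo_le_one (x : ℝ) : |cosSinTwo x| ≤ 1 := by
  rw [cosSinTwo, abs_mul]
  exact mul_le_one₀ (Real.abs_cos_le_one x) (abs_nonneg _) (Real.abs_sin_le_one _)

theorem abs_cosSinTwo_le_kappa (x : ℝ) : |cosSinTwo x| ≤ kappa :=
  le_ciSup (f := fun t => |cosSinTwo t|) ⟨1, by rintro _ ⟨t, rfl⟩; exact abs_cosSinTwo_le_one t⟩ x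

theorem kappa_le_one : kappa ≤ 1 :=
  ciSup_le abs_cosSinTwo_le_one

theorem kappa_pos : 0 < kappa := by
  have hcos : 0 < Real.cos 1 := Real.cos_pos_of_mem_Ioo ⟨by linarith [Real.pi_gt_three],
    by linarith [Real.pi_gt_three]⟩
  have hsin : 0 < Real.sin (2 * 1) :=
    Real.sin_pos_of_pos_of_lt_pi (by norm_num) (by linarith [Real.pi_gt_three])
  exact (abs_pos.2 (mul_pos hcos hsin).ne').trans_le (abs_cosSinTwo_le_kappa 1)

theorem exists_hasDerivAt_prod_cosSinTwo {ι : Type*} [Fintype ι] (c : ι → ℝ)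
    (hc : ∀ i, |c i| ≤ 1) :
    ∃ P₁ P₂ : ℝ → ℂ, ∀ t, HasDerivAt (fun t => ∏ i, (cosSinTwo (t * c i) : ℂ)) (P₁ t) t ∧
      HasDerivAt P₁ (P₂ t) t ∧ ‖∏ i, (cosSinTwo (t * c i) : ℂ)‖ ≤ kappa ^ Fintype.card ι ∧
      kappa * ‖P₁ t‖ ≤ 3 * Fintype.card ι * kappa ^ Fintype.card ι ∧
      kappa ^ 2 * ‖P₂ t‖ ≤ 9 * Fintype.card ι ^ 2 * kappa ^ Fintype.card ι := by
  have hf (i : ι) (t : ℝ) : HasDerivAt (fun t => (cosSinTwo (t * c i) : ℂ))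
      ((cosSinTwoDeriv (t * c i) * c i : ℝ) : ℂ) t :=
    ((hasDerivAt_cosSinTwo _).comp t (hasDerivAt_mul_const (c i))).ofReal_comp
  have hf' (i : ι) (t : ℝ) : HasDerivAt (fun t => ((cosSinTwoDeriv (t * c i) * c i : ℝ) : ℂ))
      ((cosSinTwoDeriv2 (t * c i) * c i * c i : ℝ) : ℂ) t :=
    (((hasDerivAt_cosSinTwoDeriv _).comp t (hasDerivAt_mul_const (c i))).mul_const
      (c i)).ofReal_comp
  have hc₀ (i : ι) := abs_nonneg (c i)
  obtain ⟨P₁, P₂, hP⟩ := exists_hasDerivAt_prod_of_norm_le univ hf hf'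
    (fun i t => by simpa using abs_cosSinTwo_le_kappa (t * c i))
    (fun i t => by
      simpa [abs_mul] using
        mul_le_mul (abs_cosSinTwoDeriv_le (t * c i)) (hc i) (hc₀ i) (by norm_num))
    (fun i t => by
      simpa [abs_mul] using mul_le_mul (mul_le_mul (abs_cosSinTwoDeriv2_le (t * c i)) (hc i) (hc₀ i)
        (by norm_num)) (hc i) (hc₀ i) (by norm_num))
  refine ⟨P₁, P₂, fun t => ?_⟩
  obtain ⟨hd₁, hd₂, h₀, h₁, h₂⟩ := hP t
  refine ⟨hd₁, hd₂, h₀, by simpa [mul_comm] using h₁, h₂.trans ?_⟩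
  have hκ := kappa_pos
  calc (#univ : ℝ) * (kappa * 9 + (#univ - 1) * 3 ^ 2) * kappa ^ #(univ : Finset ι)
      ≤ #univ * (1 * 9 + (#univ - 1) * 3 ^ 2) * kappa ^ #(univ : Finset ι) := by
        gcongr
        exact kappa_le_one
    _ = 9 * Fintype.card ι ^ 2 * kappa ^ Fintype.card ι := by rw [card_univ]; ring

theorem abs_mul_exp_neg_sq_div_two_le_one (x : ℝ) : |x| * Real.exp (-(x ^ 2 / 2)) ≤ 1 := by
  rw [Real.exp_neg, ← div_eq_mul_inv, div_le_one (Real.exp_pos _)]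
  nlinarith [Real.add_one_le_exp (x ^ 2 / 2), sq_abs x, sq_nonneg (|x| - 1)]

theorem sq_mul_exp_neg_sq_div_two_le_two (x : ℝ) : x ^ 2 * Real.exp (-(x ^ 2 / 2)) ≤ 2 := by
  rw [Real.exp_neg, ← div_eq_mul_inv, div_le_iff₀ (Real.exp_pos _)]
  linarith [Real.add_one_le_exp (x ^ 2 / 2)]

def chirp (b σ s : ℝ) : ℂ := Complex.exp (-((σ ^ 2 * s ^ 2 / 2 : ℝ) : ℂ) - Complex.I * s * b)

def chirpRate (b σ s : ℝ) : ℂ := -((σ ^ 2 * s : ℝ) : ℂ) - Complex.I * b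

def chirpDeriv (b σ s : ℝ) : ℂ := chirpRate b σ s * chirp b σ s

def chirpDeriv2 (b σ s : ℝ) : ℂ := (chirpRate b σ s ^ 2 - ((σ ^ 2 : ℝ) : ℂ)) * chirp b σ s

section chirp

variable (b σ s : ℝ)

theorem hasDerivAt_chirp : HasDerivAt (chirp b σ) (chirpDeriv b σ s) s := by
  have hre : HasDerivAt (fun s : ℝ => σ ^ 2 * s ^ 2 / 2) (σ ^ 2 * s) s := by
    refine (((hasDerivAt_id s).fun_pow 2).const_mul (σ ^ 2)).div_const 2 |>.congr_deriv ?_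
    simp only [id]
    ring
  have him : HasDerivAt (fun s : ℝ => Complex.I * s * b) (Complex.I * b) s := by
    simpa using (((hasDerivAt_id s).ofReal_comp).const_mul Complex.I).mul_const (b : ℂ)
  refine (hre.ofReal_comp.fun_neg.fun_sub him).cexp.congr_deriv ?_
  rw [chirpDeriv, chirpRate, mul_comm]
  rfl

theorem hasDerivAt_chirpDeriv : HasDerivAt (chirpDeriv b σ) (chirpDeriv2 b σ s) s := by
  have hrate : HasDerivAt (chirpRate b σ) (-((σ ^ 2 : ℝ) : ℂ)) s := by
    refine (((hasDerivAt_id s).const_mul (σ ^ 2)).ofReal_comp.fun_neg.sub_const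
      (Complex.I * b)).congr_deriv ?_
    rw [mul_one]
  refine (hrate.fun_mul (hasDerivAt_chirp b σ s)).congr_deriv ?_
  rw [chirpDeriv, chirpDeriv2]
  ring

theorem norm_chirp : ‖chirp b σ s‖ = Real.exp (-((σ * s) ^ 2 / 2)) := by
  rw [chirp, Complex.norm_exp]
  congr 1
  simp only [Complex.sub_re, Complex.neg_re, Complex.ofReal_re, Complex.mul_re, Complex.I_re,
    Complex.I_im, Complex.ofReal_im]
  ring

theorem sq_norm_chirpRate : ‖chirpRate b σ s‖ ^ 2 = σ ^ 2 * (σ * s) ^ 2 + b ^ 2 := by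
  rw [Complex.sq_norm, Complex.normSq_apply]
  simp only [chirpRate, Complex.sub_re, Complex.sub_im, Complex.neg_re, Complex.neg_im,
    Complex.ofReal_re, Complex.ofReal_im, Complex.mul_re, Complex.mul_im, Complex.I_re,
    Complex.I_im]
  ring

theorem norm_chirp_le_one : ‖chirp b σ s‖ ≤ 1 := by
  rw [norm_chirp, Real.exp_le_one_iff]
  nlinarith [sq_nonneg (σ * s)]

theorem norm_chirpRate_le : ‖chirpRate b σ s‖ ≤ σ ^ 2 * |s| + |b| := by
  refine (pow_le_pow_iff_left₀ (norm_nonneg _) (by positivity) two_ne_zero).1 ?_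
  rw [sq_norm_chirpRate, ← sq_abs b, show σ ^ 2 * (σ * s) ^ 2 = (σ ^ 2 * |s|) ^ 2 by
    rw [mul_pow, mul_pow, sq_abs]; ring]
  nlinarith [mul_nonneg (mul_nonneg (sq_nonneg σ) (abs_nonneg s)) (abs_nonneg b)]

variable {σ}

theorem norm_chirpDeriv_le (hσ : |σ| ≤ 1) : ‖chirpDeriv b σ s‖ ≤ 1 + |b| := by
  calc ‖chirpDeriv b σ s‖ ≤ (σ ^ 2 * |s| + |b|) * ‖chirp b σ s‖ := by
        rw [chirpDeriv, norm_mul]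
        gcongr
        exact norm_chirpRate_le b σ s
    _ = |σ| * (|σ * s| * ‖chirp b σ s‖) + |b| * ‖chirp b σ s‖ := by
        rw [abs_mul, ← sq_abs σ]
        ring
    _ ≤ 1 * 1 + |b| * 1 := by
        gcongr
        · rw [norm_chirp]
          exact abs_mul_exp_neg_sq_div_two_le_one _
        · exact norm_chirp_le_one b σ s
    _ = 1 + |b| := by ring

theorem norm_chirpDeriv2_le (hσ : |σ| ≤ 1) : ‖chirpDeriv2 b σ s‖ ≤ 3 + b ^ 2 := by
  have hσ₂ : σ ^ 2 ≤ 1 := by rw [← sq_abs]; exact pow_le_one₀ (abs_nonneg σ) hσ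
  calc ‖chirpDeriv2 b σ s‖ ≤ (‖chirpRate b σ s‖ ^ 2 + σ ^ 2) * ‖chirp b σ s‖ := by
        rw [chirpDeriv2, norm_mul]
        gcongr
        refine (norm_sub_le _ _).trans_eq ?_
        rw [norm_pow, Complex.norm_real, Real.norm_of_nonneg (sq_nonneg σ)]
    _ = σ ^ 2 * ((σ * s) ^ 2 * ‖chirp b σ s‖) + (b ^ 2 + σ ^ 2) * ‖chirp b σ s‖ := by
        rw [sq_norm_chirpRate]
        ring
    _ ≤ 1 * 2 + (b ^ 2 + 1) * 1 := by
        gcongr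
        · rw [norm_chirp]
          exact sq_mul_exp_neg_sq_div_two_le_two _
        · exact norm_chirp_le_one b σ s
    _ = 3 + b ^ 2 := by ring

variable (hσ : 0 < σ)
include hσ

theorem abs_mul_norm_chirp_le : |s| * ‖chirp b σ s‖ ≤ 1 / σ := by
  rw [norm_chirp, le_div_iff₀ hσ]
  calc |s| * Real.exp (-((σ * s) ^ 2 / 2)) * σ = |σ * s| * Real.exp (-((σ * s) ^ 2 / 2)) := by
        rw [abs_mul, abs_of_pos hσ]
        ring
    _ ≤ 1 := abs_mul_exp_neg_sq_div_two_le_one _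

theorem abs_mul_norm_chirpDeriv_le : |s| * ‖chirpDeriv b σ s‖ ≤ 2 + |b| / σ := by
  calc |s| * ‖chirpDeriv b σ s‖ ≤ |s| * ((σ ^ 2 * |s| + |b|) * ‖chirp b σ s‖) := by
        rw [chirpDeriv, norm_mul]
        gcongr
        exact norm_chirpRate_le b σ s
    _ = (σ * s) ^ 2 * ‖chirp b σ s‖ + |b| * (|s| * ‖chirp b σ s‖) := by
        rw [mul_pow, ← sq_abs s]
        ring
    _ ≤ 2 + |b| * (1 / σ) := by
        gcongr
        · rw [norm_chirp]
          exact sq_mul_exp_neg_sq_div_two_le_two _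
        · exact abs_mul_norm_chirp_le b s hσ
    _ = 2 + |b| / σ := by ring

end chirp

theorem uAux_eq {d : ℕ} {θ : EuclideanSpace ℝ (Fin d)} {b σ : ℝ} {P₁ : ℝ → ℂ}
    (hP : ∀ t, HasDerivAt (fun t => ∏ i, (cosSinTwo (t * θ i) : ℂ)) (P₁ t) t) :
    uAux d θ b σ = fun t =>
      chirpDeriv b σ t * ∏ i, (cosSinTwo (t * θ i) : ℂ) + chirp b σ t * P₁ t := by
  funext t
  rw [uAux]
  simp only [mul_assoc (2 : ℝ)]
  exact ((hasDerivAt_chirp b σ t).mul (hP t)).deriv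

theorem norm_leibniz_two_le (a a₁ a₂ c c₁ c₂ : ℂ) :
    ‖a₂ * c + 2 * (a₁ * c₁) + a * c₂‖ ≤ ‖a₂‖ * ‖c‖ + 2 * (‖a₁‖ * ‖c₁‖) + ‖a‖ * ‖c₂‖ := by
  refine (norm_add₃_le ..).trans ?_
  rw [norm_mul, norm_mul, norm_mul, norm_mul, Complex.norm_ofNat]

section bounds

variable {d : ℕ} {b σ : ℝ} {p p₁ p₂ : ℂ} (hd : 1 ≤ d) (h₀ : ‖p‖ ≤ kappa ^ d)
  (h₁ : kappa * ‖p₁‖ ≤ 3 * d * kappa ^ d)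
include hd h₀ h₁

theorem norm_second_deriv_chirp_mul_le (hσ : |σ| ≤ 1)
    (h₂ : kappa ^ 2 * ‖p₂‖ ≤ 9 * d ^ 2 * kappa ^ d) (t : ℝ) :
    ‖chirpDeriv2 b σ t * p + 2 * (chirpDeriv b σ t * p₁) + chirp b σ t * p₂‖ ≤
      18 / kappa ^ 2 * kappa ^ d * ((d : ℝ) ^ 2 + d * |b| + b ^ 2) := by
  have hκ := kappa_pos
  have hκ₁ := kappa_le_one
  have hd' : (1 : ℝ) ≤ d := by exact_mod_cast hd
  rw [div_mul_eq_mul_div, div_mul_eq_mul_div, le_div_iff₀' (by positivity)]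
  calc kappa ^ 2 * ‖chirpDeriv2 b σ t * p + 2 * (chirpDeriv b σ t * p₁) + chirp b σ t * p₂‖
      ≤ kappa ^ 2 * (‖chirpDeriv2 b σ t‖ * ‖p‖ + 2 * (‖chirpDeriv b σ t‖ * ‖p₁‖)
          + ‖chirp b σ t‖ * ‖p₂‖) := by
        gcongr
        exact norm_leibniz_two_le ..
    _ = kappa ^ 2 * ‖chirpDeriv2 b σ t‖ * ‖p‖ + 2 * (kappa * ‖chirpDeriv b σ t‖) * (kappa * ‖p₁‖)
          + ‖chirp b σ t‖ * (kappa ^ 2 * ‖p₂‖) := by ring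
    _ ≤ 1 * (3 + b ^ 2) * kappa ^ d + 2 * (1 * (1 + |b|)) * (3 * d * kappa ^ d)
          + 1 * (9 * d ^ 2 * kappa ^ d) := by
        gcongr
        · exact pow_le_one₀ hκ.le hκ₁
        · exact norm_chirpDeriv2_le b t hσ
        · exact norm_chirpDeriv_le b t hσ
        · exact norm_chirp_le_one b σ t
    _ = kappa ^ d * (3 + 6 * d + 9 * d ^ 2 + 6 * d * |b| + b ^ 2) := by ring
    _ ≤ kappa ^ d * (18 * ((d : ℝ) ^ 2 + d * |b| + b ^ 2)) := by
        gcongr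
        nlinarith [mul_nonneg (zero_le_one.trans hd') (abs_nonneg b), sq_nonneg b]
    _ = 18 * kappa ^ d * ((d : ℝ) ^ 2 + d * |b| + b ^ 2) := by ring

theorem norm_mul_deriv_chirp_mul_le (hσ₀ : 0 < σ) (hσ₁ : σ ≤ 1) (t : ℝ) :
    ‖(t : ℂ) * (chirpDeriv b σ t * p + chirp b σ t * p₁)‖ ≤
      18 / kappa ^ 2 * kappa ^ d * ((d + |b|) / σ) := by
  have hκ := kappa_pos
  have hκ₁ := kappa_le_one
  have hd' : (1 : ℝ) ≤ d := by exact_mod_cast hd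
  rw [div_mul_eq_mul_div, div_mul_eq_mul_div, le_div_iff₀' (by positivity)]
  calc kappa ^ 2 * ‖(t : ℂ) * (chirpDeriv b σ t * p + chirp b σ t * p₁)‖
      ≤ kappa ^ 2 * (|t| * (‖chirpDeriv b σ t‖ * ‖p‖ + ‖chirp b σ t‖ * ‖p₁‖)) := by
        rw [norm_mul, Complex.norm_real, Real.norm_eq_abs]
        gcongr
        exact (norm_add_le _ _).trans_eq (by rw [norm_mul, norm_mul])
    _ = kappa ^ 2 * (|t| * ‖chirpDeriv b σ t‖) * ‖p‖
          + kappa * (|t| * ‖chirp b σ t‖) * (kappa * ‖p₁‖) := by ring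
    _ ≤ 1 * (2 + |b| / σ) * kappa ^ d + 1 * (1 / σ) * (3 * d * kappa ^ d) := by
        gcongr
        · exact pow_le_one₀ hκ.le hκ₁
        · exact abs_mul_norm_chirpDeriv_le b t hσ₀
        · exact abs_mul_norm_chirp_le b t hσ₀
    _ = kappa ^ d * (2 * σ + 3 * d + |b|) / σ := by
        field_simp
        ring
    _ ≤ kappa ^ d * (18 * (d + |b|)) / σ := by
        refine div_le_div_of_nonneg_right (mul_le_mul_of_nonneg_left ?_ (pow_pos hκ d).le) hσ₀.le
        linarith [abs_nonneg b]
    _ = 18 * kappa ^ d * ((d + |b|) / σ) := by ring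

end bounds

end UAux

open UAux

theorem sup_bound_u_u_prime :
    ∃ C : ℝ, 0 < C ∧ ∀ (d : ℕ), 1 ≤ d → ∀ θ : EuclideanSpace ℝ (Fin d), ‖θ‖ = 1 →
      ∀ (b σ : ℝ), σ ∈ Set.Ioc (0 : ℝ) 1 →
        (∀ t : ℝ, ‖deriv (uAux d θ b σ) t‖ ≤
          C * kappa ^ d * ((d : ℝ) ^ 2 + d * |b| + b ^ 2)) ∧
        (∀ t : ℝ, ‖(t : ℂ) * uAux d θ b σ t‖ ≤
          C * kappa ^ d * ((d + |b|) / σ)) := by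
  refine ⟨18 / kappa ^ 2, div_pos (by norm_num) (pow_pos kappa_pos 2), ?_⟩
  intro d hd θ hθ b σ ⟨hσ₀, hσ₁⟩
  obtain ⟨P₁, P₂, hP⟩ := exists_hasDerivAt_prod_cosSinTwo (fun i => θ i) fun i => by
    simpa [hθ] using PiLp.norm_apply_le θ i
  simp only [Fintype.card_fin] at hP
  have hu := uAux_eq (b := b) (σ := σ) fun t => (hP t).1
  refine ⟨fun t => ?_, fun t => ?_⟩
  all_goals obtain ⟨hd₁, hd₂, h₀, h₁, h₂⟩ := hP t
  · rw [hu, (hasDerivAt_deriv_mul (hasDerivAt_chirp b σ t) (hasDerivAt_chirpDeriv b σ t)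
      hd₁ hd₂).deriv]
    exact norm_second_deriv_chirp_mul_le hd h₀ h₁ (abs_le.2 ⟨by linarith, hσ₁⟩) h₂ t
  · rw [hu]
    exact norm_mul_deriv_chirp_mul_le hd h₀ h₁ hσ₀ hσ₁ t

end
end

section
/- Fix x0 ∈ (0,1/4) and ε ∈ (0,1). For each d ≥ 1 the equation x0²/(2σ²) = log( dσ/(√(2π) ε x0) ) has a unique solution σ_d ∈ (0,∞); the sequence (σ_d)_{d≥1} is strictly decreasing; and for every C > 0 there exists d0 such that σ_d > C/log(d) for all d ≥ d0 (in particular σ_d = Ω(1/log d)). -/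
open Real Set Filter

lemma sigma_key_ineq (K M L : ℝ) (hK : 0 < K) (hLpos : 0 < L)
    (hL : K + |M| + 1 ≤ L) : (L + M) * K < L ^ 2 := by
  nlinarith [le_abs_self M, abs_nonneg M,
    mul_nonneg (sub_nonneg.mpr (show K ≤ L by nlinarith [abs_nonneg M]))
      (sub_nonneg.mpr (le_abs_self M)),
    mul_nonneg hLpos.le (show (0:ℝ) ≤ L - (K + |M| + 1) by linarith)]

set_option maxHeartbeats 1000000 in

/-- For fixed `x0 ∈ (0, 1/4)` and `ε ∈ (0,1)`, the equation
`x0²/(2σ²) = log(dσ/(√(2π)εx0))` has a unique positive solution `σ_d` for each `d ≥ 1`;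
the sequence `(σ_d)` is strictly decreasing, and `σ_d = Ω(1/log d)`. -/
theorem sigma_d_properties (x0 ε : ℝ) (hx0 : x0 ∈ Set.Ioo (0 : ℝ) (1/4))
    (hε : ε ∈ Set.Ioo (0 : ℝ) 1) :
    ∃ σ : ℕ → ℝ,
      (∀ d : ℕ, 1 ≤ d →
        (0 < σ d ∧
          x0 ^ 2 / (2 * (σ d) ^ 2) =
            Real.log ((d : ℝ) * σ d / (Real.sqrt (2 * Real.pi) * ε * x0))) ∧
        (∀ s : ℝ, 0 < s →
          x0 ^ 2 / (2 * s ^ 2) =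
            Real.log ((d : ℝ) * s / (Real.sqrt (2 * Real.pi) * ε * x0)) → s = σ d)) ∧
      (∀ d : ℕ, 1 ≤ d → σ (d + 1) < σ d) ∧
      (∀ C : ℝ, 0 < C → ∃ d0 : ℕ, ∀ d : ℕ, d0 ≤ d → C / Real.log d < σ d) := by
  obtain ⟨hx0p, hx0q⟩ := hx0
  obtain ⟨hεp, hεq⟩ := hε
  have hπ : (0:ℝ) < 2 * Real.pi := by positivity
  have hsq : 0 < Real.sqrt (2 * Real.pi) := Real.sqrt_pos.mpr hπ
  set c : ℝ := Real.sqrt (2 * Real.pi) * ε * x0 with hc_def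
  have hc : 0 < c := by positivity
  set G : ℕ → ℝ → ℝ := fun d s => x0 ^ 2 / (2 * s ^ 2) - Real.log ((d:ℝ) * s / c) with hG
  have hx2 : 0 < x0 ^ 2 := by positivity
  -- strict antitonicity in s
  have hmono : ∀ d : ℕ, 1 ≤ d → ∀ s t : ℝ, 0 < s → s < t → G d t < G d s := by
    intro d hd s t hs hst
    have hd0 : (0:ℝ) < d := by exact_mod_cast hd
    have h1 : x0 ^ 2 / (2 * t ^ 2) < x0 ^ 2 / (2 * s ^ 2) := by
      apply div_lt_div_of_pos_left hx2 (by positivity)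
      nlinarith
    have h2 : Real.log ((d:ℝ) * s / c) < Real.log ((d:ℝ) * t / c) := by
      apply Real.log_lt_log (by positivity)
      gcongr
    simp only [hG]
    linarith
  -- existence
  have hex : ∀ d : ℕ, ∃ s : ℝ, 1 ≤ d → (0 < s ∧ G d s = 0) := by
    intro d
    by_cases hd : 1 ≤ d
    · have hd0 : (0:ℝ) < d := by exact_mod_cast hd
      set a : ℝ := min 1 (c / d) with ha_def
      set b : ℝ := max 1 (c / d * Real.exp (x0 ^ 2 / 2)) with hb_def
      have ha : 0 < a := lt_min one_pos (by positivity)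
      have hab : a ≤ b := le_trans (min_le_left _ _) (le_max_left _ _)
      have hb1 : (1:ℝ) ≤ b := le_max_left _ _
      have hGa : 0 ≤ G d a := by
        have h1 : (d:ℝ) * a / c ≤ 1 := by
          rw [div_le_one hc]
          have h : a ≤ c / d := min_le_right _ _
          calc (d:ℝ) * a ≤ d * (c / d) := by nlinarith
            _ = c := by field_simp
        have h2 : Real.log ((d:ℝ) * a / c) ≤ 0 := Real.log_nonpos (by positivity) h1
        have h3 : 0 < x0 ^ 2 / (2 * a ^ 2) := by positivity
        simp only [hG]; linarith
      have hGb : G d b ≤ 0 := by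
        have h1 : x0 ^ 2 / (2 * b ^ 2) ≤ x0 ^ 2 / 2 := by
          apply div_le_div_of_nonneg_left (le_of_lt hx2) two_pos
          nlinarith
        have h2 : x0 ^ 2 / 2 ≤ Real.log ((d:ℝ) * b / c) := by
          rw [Real.le_log_iff_exp_le (by positivity)]
          rw [le_div_iff₀ hc]
          have hh : c / d * Real.exp (x0 ^ 2 / 2) ≤ b := le_max_right _ _
          calc Real.exp (x0 ^ 2 / 2) * c = d * (c / d * Real.exp (x0 ^ 2 / 2)) := by
                field_simp
            _ ≤ d * b := by nlinarith
        simp only [hG]; linarith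
      have hcont : ContinuousOn (G d) (Icc a b) := by
        apply ContinuousOn.sub
        · apply ContinuousOn.div continuousOn_const (by fun_prop)
          intro s hs
          have hsa : 0 < s := lt_of_lt_of_le ha hs.1
          positivity
        · apply ContinuousOn.log (by fun_prop)
          intro s hs
          have hsa : 0 < s := lt_of_lt_of_le ha hs.1
          positivity
      obtain ⟨s, hsm, hGs⟩ := intermediate_value_Icc' hab hcont ⟨hGb, hGa⟩
      exact ⟨s, fun _ => ⟨lt_of_lt_of_le ha hsm.1, hGs⟩⟩
    · exact ⟨1, fun h => absurd h hd⟩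
  choose σ hσ using hex
  -- uniqueness helper
  have huniq : ∀ d : ℕ, 1 ≤ d → ∀ s : ℝ, 0 < s → G d s = 0 → s = σ d := by
    intro d hd s hs hGs
    obtain ⟨hσp, hσ0⟩ := hσ d hd
    rcases lt_trichotomy s (σ d) with h | h | h
    · have := hmono d hd s (σ d) hs h; rw [hGs, hσ0] at this; exact absurd this (lt_irrefl 0)
    · exact h
    · have := hmono d hd (σ d) s hσp h; rw [hGs, hσ0] at this; exact absurd this (lt_irrefl 0)
  -- if G d s > 0 then s < σ d
  have hlt : ∀ d : ℕ, 1 ≤ d → ∀ s : ℝ, 0 < s → 0 < G d s → s < σ d := by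
    intro d hd s hs hGs
    obtain ⟨hσp, hσ0⟩ := hσ d hd
    rcases lt_trichotomy s (σ d) with h | h | h
    · exact h
    · rw [h, hσ0] at hGs; exact absurd hGs (lt_irrefl 0)
    · have := hmono d hd (σ d) s hσp h
      rw [hσ0] at this; linarith
  refine ⟨σ, ?_, ?_, ?_⟩
  · intro d hd
    obtain ⟨hσp, hσ0⟩ := hσ d hd
    refine ⟨⟨hσp, ?_⟩, ?_⟩
    · have := hσ0
      simp only [hG] at this
      linarith
    · intro s hs heq
      apply huniq d hd s hs
      simp only [hG]
      linarith
  · intro d hd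
    have hd0 : (0:ℝ) < d := by exact_mod_cast hd
    obtain ⟨hp, he⟩ := hσ (d+1) (by omega)
    obtain ⟨hσp, _⟩ := hσ d hd
    apply hlt d hd _ hp
    have hlog : Real.log ((d:ℝ) * σ (d+1) / c) < Real.log ((((d+1):ℕ):ℝ) * σ (d+1) / c) := by
      apply Real.log_lt_log (div_pos (mul_pos hd0 hp) hc)
      apply (div_lt_div_iff_of_pos_right hc).mpr
      push_cast
      nlinarith
    simp only [hG] at he ⊢
    linarith
  · intro C hC
    have hC0 : C ≠ 0 := ne_of_gt hC
    have hx00 : x0 ≠ 0 := ne_of_gt hx0p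
    obtain ⟨K, hK_def⟩ : ∃ K : ℝ, K = 2 * C ^ 2 / x0 ^ 2 := ⟨_, rfl⟩
    have hK : 0 < K := by rw [hK_def]; positivity
    obtain ⟨M, hM_def⟩ : ∃ M : ℝ, M = Real.log C - Real.log c := ⟨_, rfl⟩
    have htend : Filter.Tendsto (fun d : ℕ => Real.log d) atTop atTop :=
      Real.tendsto_log_atTop.comp tendsto_natCast_atTop_atTop
    obtain ⟨d0, hd0⟩ := eventually_atTop.mp (htend.eventually_ge_atTop (K + |M| + 1))
    refine ⟨d0, fun d hd => ?_⟩
    have hL : K + |M| + 1 ≤ Real.log d := hd0 d hd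
    have hMa : 0 ≤ |M| := abs_nonneg M
    have hLpos : 0 < Real.log d := by linarith
    have hd1 : 1 ≤ d := by
      rcases Nat.eq_zero_or_pos d with rfl | h
      · simp at hLpos
      · exact h
    have hdR : (1:ℝ) ≤ (d:ℝ) := by exact_mod_cast hd1
    have hdpos : (0:ℝ) < d := by linarith
    obtain ⟨L, hL_def⟩ : ∃ L : ℝ, L = Real.log d := ⟨_, rfl⟩
    rw [← hL_def] at hL hLpos
    have hL1 : (1:ℝ) ≤ L := by linarith
    have hL0 : L ≠ 0 := ne_of_gt hLpos
    have hs : 0 < C / L := div_pos hC hLpos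
    have hGpos : 0 < G d (C / L) := by
      have hlog : Real.log ((d:ℝ) * (C / L) / c)
          = L + Real.log C - Real.log L - Real.log c := by
        rw [Real.log_div (mul_pos hdpos hs).ne' hc.ne',
          Real.log_mul (ne_of_gt hdpos) (ne_of_gt hs),
          Real.log_div hC0 hL0, ← hL_def]
        ring
      have heq : x0 ^ 2 / (2 * (C / L) ^ 2) = L ^ 2 / K := by
        rw [hK_def]; field_simp
      have hlogL : 0 ≤ Real.log L := Real.log_nonneg hL1
      have hkey : (L + M) * K < L ^ 2 := sigma_key_ineq K M L hK hLpos hL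
      have h2 : L + M < L ^ 2 / K := (lt_div_iff₀ hK).mpr hkey
      simp only [hG]
      rw [hlog, heq]
      rw [hM_def] at h2
      linarith
    have := hlt d hd1 (C / L) hs hGpos
    rw [hL_def] at this
    exact this
end
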